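/- arXiv:1506.03308 — 5 statements merged into one kernel-verified Lean document; each statement's English description precedes it below -/
import Mathlib

section
/- If (Q_1, ..., Q_n) is a doubly stochastic n-tuple of positive semidefinite matrices, then D(Q_1, ..., Q_n) ≤ 1. -/
open Matrix

/-- The mixed discriminant of `n` real `n x n` matrices: the coefficient of the monomial
`t_1 t_2 ... t_n` in `det (t_1 Q_1 + ... + t_n Q_n)`. -/
noncomputable def mixedDiscriminant {n : ℕ} (Q : Fin n → Matrix (Fin n) (Fin n) ℝ) : ℝ :=
  MvPolynomial.coeff (∑ i : Fin n, Finsupp.single i 1)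
    (Matrix.det (∑ i, (MvPolynomial.X i : MvPolynomial (Fin n) ℝ) • (Q i).map MvPolynomial.C))


open Matrix MvPolynomial

private lemma prod_X_mul_C {n : ℕ} (f : Fin n → Fin n) (x : ℝ) :
    (∏ a : Fin n, (X (f a) : MvPolynomial (Fin n) ℝ)) * C x
      = monomial (∑ a : Fin n, Finsupp.single (f a) 1) x := by
  have h : ∀ s : Finset (Fin n),
      (∏ a ∈ s, (X (f a) : MvPolynomial (Fin n) ℝ))
        = monomial (∑ a ∈ s, Finsupp.single (f a) 1) 1 := by
    intro s
    induction s using Finset.induction with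
    | empty => simp
    | insert _ _ h ih =>
        rw [Finset.prod_insert h, Finset.sum_insert h, ih,
          ← pow_one (X (f _) : MvPolynomial (Fin n) ℝ), X_pow_eq_monomial,
          monomial_mul, one_mul]
  rw [h Finset.univ, C_apply, monomial_mul, add_zero, one_mul]

private lemma aux_coeff_nonneg {n : ℕ} {ι : Type} [Fintype ι] [DecidableEq ι]
    (c : ι → Fin n) (w : ι → Fin n → ℝ) (d : Fin n →₀ ℕ) :
    0 ≤ coeff d (Matrix.det (Matrix.of fun a b =>
      ∑ p : ι, (X (c p) : MvPolynomial (Fin n) ℝ) * (C (w p a) * C (w p b)))) := by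
  classical
  set W : (Fin n → ι) → Matrix (Fin n) (Fin n) ℝ := fun g => Matrix.of fun a b => w (g a) b with hW
  set T : (Fin n → ι) → MvPolynomial (Fin n) ℝ := fun g =>
    (∏ a : Fin n, ((X (c (g a)) : MvPolynomial (Fin n) ℝ) * C (w (g a) a))) *
      C (Matrix.det (W g)) with hT
  -- Step 1: multilinear expansion of the determinant
  have h1 : Matrix.det (Matrix.of fun a b =>
      ∑ p : ι, (X (c p) : MvPolynomial (Fin n) ℝ) * (C (w p a) * C (w p b)))
      = ∑ g : Fin n → ι, T g := by
    have hrows : (Matrix.of fun a b =>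
        ∑ p : ι, (X (c p) : MvPolynomial (Fin n) ℝ) * (C (w p a) * C (w p b)))
        = fun a => ∑ p : ι, ((X (c p) : MvPolynomial (Fin n) ℝ) * C (w p a)) •
            (fun b => (C (w p b) : MvPolynomial (Fin n) ℝ)) := by
      funext a b
      simp [Finset.sum_apply, mul_assoc]
    show Matrix.detRowAlternating _ = _
    rw [hrows]
    rw [show (Matrix.detRowAlternating (fun a => ∑ p : ι,
        ((X (c p) : MvPolynomial (Fin n) ℝ) * C (w p a)) •
          (fun b => (C (w p b) : MvPolynomial (Fin n) ℝ))) : MvPolynomial (Fin n) ℝ)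
      = Matrix.detRowAlternating.toMultilinearMap (fun a => ∑ p : ι,
        ((X (c p) : MvPolynomial (Fin n) ℝ) * C (w p a)) •
          (fun b => (C (w p b) : MvPolynomial (Fin n) ℝ))) from rfl]
    rw [MultilinearMap.map_sum]
    refine Finset.sum_congr rfl fun g _ => ?_
    rw [MultilinearMap.map_smul_univ]
    have : Matrix.detRowAlternating.toMultilinearMap
        (fun a => (fun b => (C (w (g a) b) : MvPolynomial (Fin n) ℝ)))
        = C (Matrix.det (W g)) := by
      rw [RingHom.map_det]
      rfl
    rw [this, hT, smul_eq_mul]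
  rw [h1]
  -- Step 2: symmetrization
  have h2 : ∀ g : Fin n → ι, ∑ σ : Equiv.Perm (Fin n), T (g ∘ σ)
      = (∏ a : Fin n, (X (c (g a)) : MvPolynomial (Fin n) ℝ)) * C (Matrix.det (W g) ^ 2) := by
    intro g
    have hperm : ∀ σ : Equiv.Perm (Fin n), Matrix.det (W (g ∘ σ))
        = ((Equiv.Perm.sign σ : ℤ) : ℝ) * Matrix.det (W g) := by
      intro σ
      have := Matrix.det_permute σ (W g)
      exact this
    have key : ∀ σ : Equiv.Perm (Fin n), T (g ∘ σ)
        = (∏ a : Fin n, (X (c (g a)) : MvPolynomial (Fin n) ℝ)) *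
            C ((((Equiv.Perm.sign σ : ℤ) : ℝ) * ∏ a : Fin n, w (g (σ a)) a) * Matrix.det (W g)) := by
      intro σ
      rw [hT]
      simp only [Function.comp_apply]
      rw [Finset.prod_mul_distrib,
        Equiv.prod_comp σ (fun a => (X (c (g a)) : MvPolynomial (Fin n) ℝ)),
        hperm σ, ← map_prod C (fun a => w (g (σ a)) a) Finset.univ, mul_assoc, ← _root_.map_mul C]
      congr 2
      ring
    rw [Finset.sum_congr rfl fun σ _ => key σ, ← Finset.mul_sum, ← map_sum, ← Finset.sum_mul,
      show (∑ σ : Equiv.Perm (Fin n), ((Equiv.Perm.sign σ : ℤ) : ℝ) * ∏ a : Fin n, w (g (σ a)) a)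
        = Matrix.det (W g) from (Matrix.det_apply' (W g)).symm, sq]
  -- Step 3: averaging over permutations
  have h3 : (Fintype.card (Equiv.Perm (Fin n))) • (∑ g : Fin n → ι, T g)
      = ∑ g : Fin n → ι, (∏ a : Fin n, (X (c (g a)) : MvPolynomial (Fin n) ℝ)) *
          C (Matrix.det (W g) ^ 2) := by
    calc (Fintype.card (Equiv.Perm (Fin n))) • (∑ g : Fin n → ι, T g)
        = ∑ _σ : Equiv.Perm (Fin n), ∑ g : Fin n → ι, T g := by
          rw [Finset.sum_const, Finset.card_univ]
      _ = ∑ σ : Equiv.Perm (Fin n), ∑ g : Fin n → ι, T (g ∘ σ) := by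
          refine Finset.sum_congr rfl fun σ _ => ?_
          exact (Equiv.sum_comp (Equiv.arrowCongr σ.symm (Equiv.refl ι)) T).symm
      _ = ∑ g : Fin n → ι, ∑ σ : Equiv.Perm (Fin n), T (g ∘ σ) := Finset.sum_comm
      _ = _ := Finset.sum_congr rfl fun g _ => h2 g
  -- conclude
  have h4 : 0 ≤ (Fintype.card (Equiv.Perm (Fin n))) • coeff d (∑ g : Fin n → ι, T g) := by
    rw [← MvPolynomial.coeff_smul, h3, MvPolynomial.coeff_sum]
    refine Finset.sum_nonneg fun g _ => ?_
    rw [prod_X_mul_C, coeff_monomial]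
    split <;> positivity
  have hcard : 0 < ((Fintype.card (Equiv.Perm (Fin n)) : ℕ) : ℝ) := by
    exact_mod_cast Fintype.card_pos
  rw [nsmul_eq_mul] at h4
  nlinarith [h4, hcard]

theorem mixedDiscriminant_doublyStochastic_le_one' {n : ℕ}
    (Q : Fin n → Matrix (Fin n) (Fin n) ℝ)
    (hpsd : ∀ i, (Q i).PosSemidef)
    (hsum : ∑ i, Q i = (1 : Matrix (Fin n) (Fin n) ℝ))
    (htr : ∀ i, (Q i).trace = 1) :
    MvPolynomial.coeff (∑ i : Fin n, Finsupp.single i 1)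
      (Matrix.det (∑ i, (MvPolynomial.X i : MvPolynomial (Fin n) ℝ) • (Q i).map MvPolynomial.C)) ≤ 1 := by
  classical
  set p : MvPolynomial (Fin n) ℝ :=
    Matrix.det (∑ i, (MvPolynomial.X i : MvPolynomial (Fin n) ℝ) • (Q i).map MvPolynomial.C) with hp
  -- choose square roots
  have hex : ∀ i, ∃ B : Matrix (Fin n) (Fin n) ℝ, Q i = Bᴴ * B := fun i =>
    by open scoped MatrixOrder in exact ⟨CFC.sqrt (Q i), by
      rw [← Matrix.star_eq_conjTranspose, (CFC.sqrt_nonneg (Q i)).isSelfAdjoint.star_eq,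
        CFC.sqrt_mul_sqrt_self (Q i) (hpsd i).nonneg]⟩
  choose B hB using hex
  set w : Fin n × Fin n → Fin n → ℝ := fun q => fun a => B q.1 q.2 a with hw
  have hPQ : (∑ i, (MvPolynomial.X i : MvPolynomial (Fin n) ℝ) • (Q i).map MvPolynomial.C)
      = Matrix.of fun a b => ∑ q : Fin n × Fin n,
          (X q.1 : MvPolynomial (Fin n) ℝ) * (C (w q a) * C (w q b)) := by
    funext a b
    have hQ : ∀ i, Q i a b = ∑ k, B i k a * B i k b := by
      intro i
      rw [hB i]
      simp [Matrix.mul_apply, Matrix.conjTranspose_apply]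
    simp only [Matrix.sum_apply, Matrix.smul_apply, Matrix.map_apply, smul_eq_mul,
      Matrix.of_apply, Fintype.sum_prod_type, hQ, map_sum, Finset.mul_sum, ← _root_.map_mul, hw]
  -- nonnegativity of all coefficients
  have hnn : ∀ d : Fin n →₀ ℕ, 0 ≤ coeff d p := by
    intro d
    rw [hp, hPQ]
    exact aux_coeff_nonneg Prod.fst w d
  -- evaluation at all ones
  have heval : eval (fun _ : Fin n => (1 : ℝ)) p = 1 := by
    rw [hp, RingHom.map_det]
    have : (eval (fun _ : Fin n => (1 : ℝ))).mapMatrix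
        (∑ i, (MvPolynomial.X i : MvPolynomial (Fin n) ℝ) • (Q i).map MvPolynomial.C)
        = ∑ i, Q i := by
      funext a b
      simp [RingHom.mapMatrix_apply, Matrix.map_apply, Matrix.sum_apply, Matrix.smul_apply,
        smul_eq_mul]
    rw [this, hsum, Matrix.det_one]
  have hsupp : ∑ d ∈ p.support, coeff d p = 1 := by
    rw [← heval, eval_eq]
    simp
  by_cases hmem : (∑ i : Fin n, Finsupp.single i 1) ∈ p.support
  · rw [← hsupp]
    exact Finset.single_le_sum (fun d _ => hnn d) hmem
  · rw [MvPolynomial.notMem_support_iff.mp hmem]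
    norm_num

theorem mixedDiscriminant_doublyStochastic_le_one {n : ℕ}
    (Q : Fin n → Matrix (Fin n) (Fin n) ℝ)
    (hpsd : ∀ i, (Q i).PosSemidef)
    (hsum : ∑ i, Q i = (1 : Matrix (Fin n) (Fin n) ℝ))
    (htr : ∀ i, (Q i).trace = 1) :
    mixedDiscriminant Q ≤ 1 := by
  exact mixedDiscriminant_doublyStochastic_le_one' Q hpsd hsum htr
end

section
/- Let Q_1, ..., Q_n be n×n positive definite matrices with Σ_{i=1}^n tr Q_i = n. Let H = {x ∈ ℝ^n : Σ x_i = 0} and f(x_1,...,x_n) = ln det(Σ_{i=1}^n e^{x_i} Q_i) on H. Suppose (ξ_1, ..., ξ_n) ∈ H is a minimum point of f on H, let S be an invertible matrix with S*S = Σ_i e^{ξ_i} Q_i, set T = S^{-1}, τ_i = e^{ξ_i}, and B_i = τ_i T* Q_i T. Then D(B_1, ..., B_n) ≥ D(Q_1, ..., Q_n). -/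
open Matrix

/-!
Substituting `t_i ↦ τ_i t_i` and conjugating by `T` in `det (∑ t_i Q_i)` gives
`D(B) = (det T)² (∏ τ_i) D(Q)`, where `∏ τ_i = exp (∑ ξ_i) = 1` and
`(det T)² = 1 / det (∑ τ_i Q_i)`. Minimality of `ξ`, compared with `x = 0`, gives
`det (∑ τ_i Q_i) ≤ det (∑ Q_i)`, and AM–GM on the eigenvalues of `∑ Q_i`, whose trace is `n`,
gives `det (∑ Q_i) ≤ 1`; so the factor is at least `1`. Finally `D(Q) ≥ 0`: writing each `Q_i`
as a sum of rank-one matrices `v vᵀ` and expanding `D` multilinearly turns `D(Q)` into a sum of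
squared determinants.
-/

open scoped Finset

lemma Function.bijective_of_sum_single_eq {α : Type*} [Fintype α] [DecidableEq α] {φ : α → α}
    (h : ∑ j, Finsupp.single (φ j) 1 = ∑ i, Finsupp.single i 1) : φ.Bijective := by
  have hfiber (i : α) : #{j | φ j = i} = 1 := by
    have := DFunLike.congr_fun h i
    simp only [Finsupp.finsetSum_apply, Finsupp.single_apply, Finset.sum_ite_eq',
      Finset.mem_univ, if_true] at this
    rw [Finset.card_filter, this]
  have hinj : φ.Injective := fun a b hab =>
    Finset.card_le_one.mp (hfiber (φ a)).le a (by simp) b (by simp [hab])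
  exact ⟨hinj, Finite.surjective_of_injective hinj⟩

lemma Fintype.sum_ite_bijective {α β : Type*} [Fintype α] [DecidableEq α] [AddCommMonoid β]
    (f : (α → α) → β) :
    ∑ φ : α → α, (if φ.Bijective then f φ else 0) = ∑ σ : Equiv.Perm α, f σ := by
  rw [← Finset.sum_filter]
  exact Finset.sum_bij' (fun φ hφ => Equiv.ofBijective φ (Finset.mem_filter.1 hφ).2)
    (fun σ _ => σ) (fun _ _ => Finset.mem_univ _)
    (fun σ _ => Finset.mem_filter.2 ⟨Finset.mem_univ _, σ.bijective⟩)
    (fun _ _ => rfl) (fun _ _ => Equiv.ext fun _ => rfl) (fun _ _ => rfl)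

lemma MvPolynomial.coeff_sum_single_prod_X_mul_C {σ R : Type*} [Fintype σ] [DecidableEq σ]
    [CommSemiring R] (φ : σ → σ) (a : R) :
    coeff (∑ i, Finsupp.single i 1) ((∏ j, X (φ j)) * C a) = if φ.Bijective then a else 0 := by
  rw [mul_comm]
  unfold X
  rw [← monomial_sum_index, coeff_monomial]
  refine if_congr ⟨Function.bijective_of_sum_single_eq, fun h => ?_⟩ rfl rfl
  exact Equiv.sum_comp (Equiv.ofBijective φ h) fun i => Finsupp.single i 1

lemma Matrix.det_of_sum_cols {m ι R : Type*} [Fintype m] [DecidableEq m] [Fintype ι]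
    [CommRing R] (A : m → ι → m → R) :
    (of fun p j => ∑ k, A j k p).det = ∑ r : m → ι, (of fun p j => A j (r j) p).det := by
  have hrows : (of fun p j => ∑ k, A j k p)ᵀ = fun j => ∑ k, A j k := by
    ext j p; simp
  rw [← det_transpose, hrows]
  exact ((detRowAlternating (n := m) (R := R)).map_sum A).trans
    (Finset.sum_congr rfl fun r _ => (det_transpose _).symm)

lemma Matrix.PosSemidef.exists_eq_sum_vecMulVec_self {m : Type*} [Fintype m]
    {A : Matrix m m ℝ} (hA : A.PosSemidef) :
    ∃ w : m → m → ℝ, A = ∑ k, vecMulVec (w k) (w k) := by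
  classical
  obtain ⟨B, rfl⟩ : ∃ B : Matrix m m ℝ, A = star B * B := by
    open scoped MatrixOrder in exact CStarAlgebra.nonneg_iff_eq_star_mul_self.mp hA.nonneg
  refine ⟨fun k => B k, ?_⟩
  ext p j
  simp [star_eq_conjTranspose, mul_apply, Matrix.sum_apply, vecMulVec_apply]

lemma Real.prod_le_sum_div_card_pow {ι : Type*} [Fintype ι] {z : ι → ℝ} (hz : ∀ i, 0 ≤ z i) :
    ∏ i, z i ≤ ((∑ i, z i) / Fintype.card ι) ^ Fintype.card ι := by
  cases isEmpty_or_nonempty ι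
  · simp
  have hcard : (0 : ℝ) < Fintype.card ι := by exact_mod_cast Fintype.card_pos
  have hamgm := geom_mean_le_arith_mean Finset.univ (fun _ => 1) z (fun _ _ => zero_le_one)
    (by simpa using hcard) fun i _ => hz i
  simp only [rpow_one, one_mul, Finset.sum_const, Finset.card_univ, nsmul_eq_mul,
    mul_one] at hamgm
  rwa [rpow_inv_le_iff_of_pos (Finset.prod_nonneg fun i _ => hz i)
    (div_nonneg (Finset.sum_nonneg fun i _ => hz i) hcard.le) hcard, rpow_natCast] at hamgm

lemma Matrix.PosSemidef.det_le_trace_div_card_pow {m : Type*} [Fintype m] [DecidableEq m]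
    {A : Matrix m m ℝ} (hA : A.PosSemidef) :
    A.det ≤ (A.trace / Fintype.card m) ^ Fintype.card m := by
  rw [hA.isHermitian.det_eq_prod_eigenvalues, hA.isHermitian.trace_eq_sum_eigenvalues]
  simpa using Real.prod_le_sum_div_card_pow hA.eigenvalues_nonneg

section MixedDiscriminant

variable {n : ℕ}

lemma mixedDiscriminant_eq_sum_perm (M : Fin n → Matrix (Fin n) (Fin n) ℝ) :
    mixedDiscriminant M = ∑ σ : Equiv.Perm (Fin n), (of fun p j => M (σ j) p j).det := by
  have hentry (p j : Fin n) :
      (∑ i, (MvPolynomial.X i : MvPolynomial (Fin n) ℝ) • (M i).map MvPolynomial.C) p j =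
        ∑ i, MvPolynomial.X i * MvPolynomial.C (M i p j) := by
    simp [Matrix.sum_apply]
  have hterm (π : Equiv.Perm (Fin n)) (φ : Fin n → Fin n) :
      MvPolynomial.coeff (∑ i, Finsupp.single i 1)
          ((Equiv.Perm.sign π : MvPolynomial (Fin n) ℝ) *
            ∏ j, (MvPolynomial.X (φ j) * MvPolynomial.C (M (φ j) (π j) j))) =
        if φ.Bijective then (Equiv.Perm.sign π : ℝ) * ∏ j, M (φ j) (π j) j else 0 := by
    rw [Finset.prod_mul_distrib, ← map_prod, mul_left_comm,
      ← map_intCast (MvPolynomial.C : ℝ →+* MvPolynomial (Fin n) ℝ), ← map_mul,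
      MvPolynomial.coeff_sum_single_prod_X_mul_C]
  simp_rw [mixedDiscriminant, det_apply', hentry, Finset.prod_univ_sum, Finset.mul_sum,
    MvPolynomial.coeff_sum, hterm, Fintype.piFinset_univ, Fintype.sum_ite_bijective]
  exact Finset.sum_comm

lemma mixedDiscriminant_sum {ι : Type*} [Fintype ι] (W : Fin n → ι → Matrix (Fin n) (Fin n) ℝ) :
    mixedDiscriminant (fun i => ∑ k, W i k) =
      ∑ κ : Fin n → ι, mixedDiscriminant (fun i => W i (κ i)) := by
  simp_rw [mixedDiscriminant_eq_sum_perm, Matrix.sum_apply]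
  rw [Finset.sum_comm]
  refine Finset.sum_congr rfl fun σ _ => ?_
  rw [det_of_sum_cols fun j k p => W (σ j) k p j]
  exact Fintype.sum_equiv (Equiv.arrowCongr σ (Equiv.refl ι)) _ _ fun r => by
    simp [Equiv.arrowCongr]

lemma mixedDiscriminant_vecMulVec_self (v : Fin n → Fin n → ℝ) :
    mixedDiscriminant (fun i => vecMulVec (v i) (v i)) = (of fun p i => v i p).det ^ 2 := by
  set V : Matrix (Fin n) (Fin n) ℝ := of fun p i => v i p
  have hcols (σ : Equiv.Perm (Fin n)) :
      (of fun p j => vecMulVec (v (σ j)) (v (σ j)) p j) =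
        V.submatrix id σ * diagonal fun j => v (σ j) j := by
    ext p j; simp [V, mul_diagonal, vecMulVec_apply]
  have hdet : V.det = ∑ σ : Equiv.Perm (Fin n), (Equiv.Perm.sign σ : ℝ) * ∏ j, v (σ j) j := by
    rw [← det_transpose, det_apply']; rfl
  simp_rw [mixedDiscriminant_eq_sum_perm, hcols, det_mul, det_permute', det_diagonal]
  calc ∑ σ : Equiv.Perm (Fin n), (Equiv.Perm.sign σ : ℝ) * V.det * ∏ j, v (σ j) j
      = V.det * ∑ σ : Equiv.Perm (Fin n), (Equiv.Perm.sign σ : ℝ) * ∏ j, v (σ j) j := by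
        rw [Finset.mul_sum]
        exact Finset.sum_congr rfl fun σ _ => by ring
    _ = V.det ^ 2 := by rw [← hdet, sq]

lemma mixedDiscriminant_nonneg {Q : Fin n → Matrix (Fin n) (Fin n) ℝ}
    (hQ : ∀ i, (Q i).PosSemidef) : 0 ≤ mixedDiscriminant Q := by
  choose w hw using fun i => (hQ i).exists_eq_sum_vecMulVec_self
  rw [funext hw, mixedDiscriminant_sum]
  exact Finset.sum_nonneg fun κ _ => mixedDiscriminant_vecMulVec_self _ ▸ sq_nonneg _

lemma mixedDiscriminant_smul (τ : Fin n → ℝ) (M : Fin n → Matrix (Fin n) (Fin n) ℝ) :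
    mixedDiscriminant (fun i => τ i • M i) = (∏ i, τ i) * mixedDiscriminant M := by
  simp_rw [mixedDiscriminant_eq_sum_perm, Finset.mul_sum, Matrix.smul_apply, smul_eq_mul]
  refine Finset.sum_congr rfl fun σ _ => ?_
  rw [← Equiv.prod_comp σ τ, ← det_mul_row]
  rfl

lemma mixedDiscriminant_transpose_mul_mul (T : Matrix (Fin n) (Fin n) ℝ)
    (M : Fin n → Matrix (Fin n) (Fin n) ℝ) :
    mixedDiscriminant (fun i => Tᵀ * M i * T) = T.det ^ 2 * mixedDiscriminant M := by
  let C : ℝ →+* MvPolynomial (Fin n) ℝ := MvPolynomial.C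
  have hconj : ∑ i, (MvPolynomial.X i : MvPolynomial (Fin n) ℝ) • (Tᵀ * M i * T).map C =
      (T.map C)ᵀ * (∑ i, (MvPolynomial.X i : MvPolynomial (Fin n) ℝ) • (M i).map C) * T.map C := by
    simp only [Matrix.map_mul, transpose_map, Finset.mul_sum, Finset.sum_mul, Matrix.mul_smul,
      Matrix.smul_mul]
  have hdet : (T.map C).det = C T.det := (RingHom.map_det C T).symm
  rw [mixedDiscriminant, mixedDiscriminant, hconj, det_mul, det_mul, det_transpose, hdet,
    mul_comm, ← mul_assoc, ← map_mul, MvPolynomial.coeff_C_mul, sq]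

end MixedDiscriminant

theorem mixedDiscriminant_scaled_ge_general {n : ℕ}
    (Q : Fin n → Matrix (Fin n) (Fin n) ℝ)
    (hQ : ∀ i, (Q i).PosDef)
    (htr : ∑ i, (Q i).trace = (n : ℝ))
    (ξ : Fin n → ℝ) (hξH : ∑ i, ξ i = 0)
    (hmin : ∀ x : Fin n → ℝ, ∑ i, x i = 0 →
      Real.log (Matrix.det (∑ i, Real.exp (ξ i) • Q i)) ≤
        Real.log (Matrix.det (∑ i, Real.exp (x i) • Q i)))
    (S : Matrix (Fin n) (Fin n) ℝ)
    (hSS : Sᵀ * S = ∑ i, Real.exp (ξ i) • Q i) :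
    mixedDiscriminant Q ≤
      mixedDiscriminant (fun i => Real.exp (ξ i) • ((S⁻¹)ᵀ * Q i * S⁻¹)) := by
  cases isEmpty_or_nonempty (Fin n)
  · exact (congrArg mixedDiscriminant (Subsingleton.elim _ _)).le
  have hQsum : (∑ i, Q i).PosDef := posDef_sum Finset.univ_nonempty fun i _ => hQ i
  have hξsum : (∑ i, Real.exp (ξ i) • Q i).PosDef :=
    posDef_sum Finset.univ_nonempty fun i _ => (hQ i).smul (Real.exp_pos _)
  have hdet_sum : (∑ i, Q i).det ≤ 1 := by
    have hn : (n : ℝ) ≠ 0 := Nat.cast_ne_zero.2 (Fin.pos_iff_nonempty.2 ‹_›).ne'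
    simpa [trace_sum, htr, hn] using hQsum.posSemidef.det_le_trace_div_card_pow
  have hdet_min : (∑ i, Real.exp (ξ i) • Q i).det ≤ 1 := by
    have h0 := hmin 0 (by simp)
    simp only [Pi.zero_apply, Real.exp_zero, one_smul] at h0
    exact ((Real.log_le_log_iff hξsum.det_pos hQsum.det_pos).1 h0).trans hdet_sum
  have hdetS : S.det ^ 2 = (∑ i, Real.exp (ξ i) • Q i).det := by
    rw [← hSS, det_mul, det_transpose, sq]
  have hscale : 1 ≤ (S⁻¹).det ^ 2 := by
    rw [det_nonsing_inv, Ring.inverse_eq_inv, inv_pow, hdetS]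
    exact one_le_inv_iff₀.2 ⟨hξsum.det_pos, hdet_min⟩
  rw [mixedDiscriminant_smul, mixedDiscriminant_transpose_mul_mul, ← Real.exp_sum, hξH,
    Real.exp_zero, one_mul]
  exact le_mul_of_one_le_left (mixedDiscriminant_nonneg fun i => (hQ i).posSemidef) hscale

theorem mixedDiscriminant_scaled_ge {n : ℕ}
    (Q : Fin n → Matrix (Fin n) (Fin n) ℝ)
    (hQ : ∀ i, (Q i).PosDef)
    (htr : ∑ i, (Q i).trace = (n : ℝ))
    (ξ : Fin n → ℝ) (hξH : ∑ i, ξ i = 0)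
    (hmin : ∀ x : Fin n → ℝ, ∑ i, x i = 0 →
      Real.log (Matrix.det (∑ i, Real.exp (ξ i) • Q i)) ≤
        Real.log (Matrix.det (∑ i, Real.exp (x i) • Q i)))
    (S : Matrix (Fin n) (Fin n) ℝ) (hS : IsUnit S.det)
    (hSS : Sᵀ * S = ∑ i, Real.exp (ξ i) • Q i) :
    mixedDiscriminant Q ≤
      mixedDiscriminant (fun i => Real.exp (ξ i) • ((S⁻¹)ᵀ * Q i * S⁻¹)) :=
  mixedDiscriminant_scaled_ge_general Q hQ htr ξ hξH hmin S hSS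
end

section
/- Let f: H → ℝ be defined by f(x_1, ..., x_n) = ln det(Σ_{i=1}^n e^{x_i} Q_i), where Q_1, ..., Q_n are n×n positive definite real symmetric matrices and H = {x ∈ ℝ^n : Σ x_i = 0}. Then Σ_{i=1}^n e^{x_i} Q_i is positive definite for every x ∈ H, so f is well defined, and f is convex on H. -/
open Matrix Finset

lemma quad_sum {ι m : Type*} [Fintype m] (v : m → ℝ) (M : ι → Matrix m m ℝ) (s : Finset ι) :
    v ⬝ᵥ ((∑ i ∈ s, M i) *ᵥ v) = ∑ i ∈ s, v ⬝ᵥ (M i *ᵥ v) := by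
  classical
  induction s using Finset.induction_on with
  | empty => simp
  | insert _ _ h ih =>
    rw [Finset.sum_insert h, Finset.sum_insert h, add_mulVec, dotProduct_add, ih]

lemma quad_smul {m : Type*} [Fintype m] (v : m → ℝ) (c : ℝ) (M : Matrix m m ℝ) :
    v ⬝ᵥ ((c • M) *ᵥ v) = c * (v ⬝ᵥ (M *ᵥ v)) := by
  rw [smul_mulVec, dotProduct_smul, smul_eq_mul]

lemma star_real {m : Type*} (v : m → ℝ) : star v = v := by
  funext i; exact star_trivial _

lemma posdef_sum_exp_smul {n : ℕ} (Q : Fin n → Matrix (Fin n) (Fin n) ℝ)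
    (hQ : ∀ i, (Q i).PosDef) (x : Fin n → ℝ) :
    (∑ i, Real.exp (x i) • Q i).PosDef := by
  refine Matrix.PosDef.of_dotProduct_mulVec_pos ?_ ?_
  · rw [Matrix.IsHermitian, conjTranspose_sum]
    refine Finset.sum_congr rfl fun i _ => ?_
    rw [conjTranspose_smul]
    rw [star_trivial, (hQ i).1]
  · intro v hv
    rw [star_real, quad_sum]
    have : Nonempty (Fin n) := by
      obtain ⟨i, -⟩ := Function.ne_iff.mp hv; exact ⟨i⟩
    apply Finset.sum_pos
    · intro i _
      rw [quad_smul]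
      have := (hQ i).dotProduct_mulVec_pos hv
      rw [star_real] at this
      exact mul_pos (Real.exp_pos _) this
    · exact univ_nonempty


lemma posdef_conj {m : Type*} [Fintype m] [DecidableEq m] {N P : Matrix m m ℝ}
    (hN : N.PosDef) (hP : IsUnit P.det) : (Pᵀ * N * P).PosDef := by
  refine Matrix.PosDef.of_dotProduct_mulVec_pos ?_ ?_
  · show (Pᵀ * N * P)ᴴ = _
    rw [conjTranspose_mul, conjTranspose_mul, hN.1.eq]
    rw [conjTranspose_eq_transpose_of_trivial, conjTranspose_eq_transpose_of_trivial,
      transpose_transpose, Matrix.mul_assoc]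
  · intro v hv
    have hPv : P *ᵥ v ≠ 0 := by
      intro h
      apply hv
      have hinj := Matrix.mulVec_injective_iff_isUnit.mpr ((Matrix.isUnit_iff_isUnit_det P).mpr hP)
      apply hinj
      rw [h, Matrix.mulVec_zero]
    have := hN.dotProduct_mulVec_pos hPv
    rw [star_real] at this ⊢
    rwa [← Matrix.mulVec_mulVec, ← Matrix.mulVec_mulVec, Matrix.dotProduct_mulVec,
      Matrix.vecMul_transpose]

lemma det_le_prod_diag {m : Type*} [Fintype m] [DecidableEq m] {N : Matrix m m ℝ}
    (hN : N.PosDef) : N.det ≤ ∏ j, N j j := by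
  rcases isEmpty_or_nonempty m with h | h
  · simp [Matrix.det_isEmpty]
  have hd : ∀ j, 0 < N j j := by
    intro j
    have h1 := hN.dotProduct_mulVec_pos (x := (Pi.single j 1 : m → ℝ)) (fun hc => by have hcj := congrFun hc j; rw [Pi.single_eq_same] at hcj; exact one_ne_zero hcj)
    rw [star_real] at h1
    simpa [dotProduct, Matrix.mulVec_single, Pi.single_apply] using h1
  set s : m → ℝ := fun j => Real.sqrt (N j j) with hs
  have hspos : ∀ j, 0 < s j := fun j => Real.sqrt_pos.mpr (hd j)
  set E : Matrix m m ℝ := Matrix.diagonal (fun j => (s j)⁻¹) with hE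
  have hdetE : E.det = ∏ j, (s j)⁻¹ := Matrix.det_diagonal
  have hEunit : IsUnit E.det := by
    rw [hdetE]
    exact (Finset.prod_pos (fun j _ => inv_pos.mpr (hspos j))).ne'.isUnit
  have hET : Eᵀ = E := Matrix.diagonal_transpose _
  have hN' : (E * N * E).PosDef := by
    have := posdef_conj hN hEunit
    rwa [hET] at this
  set N' := E * N * E with hN'def
  have hdiag : ∀ j, N' j j = 1 := by
    intro j
    have e1 : (E * N * E) j j = (E * N) j j * (s j)⁻¹ := by
      rw [hE, Matrix.mul_diagonal]
    have e2 : (E * N) j j = (s j)⁻¹ * N j j := by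
      rw [hE, Matrix.diagonal_mul]
    rw [hN'def, e1, e2, show N j j = s j * s j from (Real.mul_self_sqrt (hd j).le).symm]
    field_simp
    exact div_self (hspos j).ne'
  have htrace : N'.trace = (Fintype.card m : ℝ) := by
    rw [Matrix.trace]
    simp [Matrix.diag, hdiag]
  -- eigenvalues
  have hherm := hN'.1
  have hdet_eig : N'.det = ∏ j, hherm.eigenvalues j := by
    simpa using hherm.det_eq_prod_eigenvalues
  have htrace_eig : N'.trace = ∑ j, hherm.eigenvalues j := by
    have hspec := hherm.spectral_theorem
    have hU : (star (hherm.eigenvectorUnitary : Matrix m m ℝ)) *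
        (hherm.eigenvectorUnitary : Matrix m m ℝ) = 1 := by
      simpa using unitary.coe_star_mul_self hherm.eigenvectorUnitary
    calc N'.trace = Matrix.trace ((hherm.eigenvectorUnitary : Matrix m m ℝ) *
          Matrix.diagonal (RCLike.ofReal ∘ hherm.eigenvalues) *
          (star (hherm.eigenvectorUnitary : Matrix m m ℝ))) := by
              conv_lhs => rw [hspec]
              rw [Unitary.conjStarAlgAut_apply]
      _ = Matrix.trace ((star (hherm.eigenvectorUnitary : Matrix m m ℝ)) *
          (hherm.eigenvectorUnitary : Matrix m m ℝ) *
          Matrix.diagonal (RCLike.ofReal ∘ hherm.eigenvalues)) := by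
            rw [Matrix.trace_mul_cycle]
      _ = ∑ j, hherm.eigenvalues j := by
            rw [hU, Matrix.one_mul, Matrix.trace_diagonal]
            simp
  have heigpos : ∀ j, 0 < hherm.eigenvalues j := hN'.eigenvalues_pos
  -- AM-GM
  have hcard : (0:ℝ) < (Fintype.card m : ℝ) := by
    exact_mod_cast Fintype.card_pos
  have hgm := Real.geom_mean_le_arith_mean_weighted Finset.univ
      (fun _ => ((Fintype.card m : ℝ))⁻¹) hherm.eigenvalues
      (fun _ _ => by positivity)
      (by simp [Finset.sum_const, inv_mul_cancel₀ hcard.ne', mul_comm])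
      (fun j _ => (heigpos j).le)
  have hgm2 : (∏ j, hherm.eigenvalues j) ^ ((Fintype.card m : ℝ))⁻¹ ≤ 1 := by
    calc (∏ j, hherm.eigenvalues j) ^ ((Fintype.card m : ℝ))⁻¹
        = ∏ j, (hherm.eigenvalues j) ^ ((Fintype.card m : ℝ))⁻¹ := by
          rw [← Real.finset_prod_rpow _ _ (fun j _ => (heigpos j).le)]
      _ ≤ ∑ j, ((Fintype.card m : ℝ))⁻¹ * hherm.eigenvalues j := hgm
      _ = ((Fintype.card m : ℝ))⁻¹ * N'.trace := by
          rw [htrace_eig, Finset.mul_sum]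
      _ = 1 := by rw [htrace]; exact inv_mul_cancel₀ hcard.ne'
  have hdetN'le : N'.det ≤ 1 := by
    have hprodnn : (0:ℝ) ≤ ∏ j, hherm.eigenvalues j :=
      Finset.prod_nonneg (fun j _ => (heigpos j).le)
    have : (∏ j, hherm.eigenvalues j) =
        ((∏ j, hherm.eigenvalues j) ^ ((Fintype.card m : ℝ))⁻¹) ^ (Fintype.card m : ℕ) := by
      rw [← Real.rpow_natCast ((∏ j, hherm.eigenvalues j) ^ ((Fintype.card m : ℝ))⁻¹),
        ← Real.rpow_mul hprodnn, inv_mul_cancel₀ hcard.ne', Real.rpow_one]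
    rw [hdet_eig, this]
    exact pow_le_one₀ (Real.rpow_nonneg hprodnn _) hgm2
  -- conclude
  have hdetN' : N'.det = (∏ j, (s j)⁻¹) * N.det * (∏ j, (s j)⁻¹) := by
    rw [hN'def, Matrix.det_mul, Matrix.det_mul, hdetE]
  have hP : (0:ℝ) < ∏ j, s j := Finset.prod_pos (fun j _ => hspos j)
  have hNdet : N.det = N'.det * (∏ j, s j) ^ 2 := by
    have hpi : (∏ j, (s j)⁻¹) = (∏ j, s j)⁻¹ := by
      rw [← Finset.prod_inv_distrib]
    rw [hdetN', hpi]
    field_simp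
  rw [hNdet]
  calc N'.det * (∏ j, s j) ^ 2 ≤ 1 * (∏ j, s j) ^ 2 := by
        apply mul_le_mul_of_nonneg_right hdetN'le (by positivity)
    _ = ∏ j, N j j := by
        rw [one_mul, sq, ← Finset.prod_mul_distrib]
        exact Finset.prod_congr rfl (fun j _ => Real.mul_self_sqrt (hd j).le)

section helpers
variable {m : Type*} [Fintype m] [DecidableEq m]


lemma posdef_diag_pos {N : Matrix m m ℝ} (hN : N.PosDef) (j : m) : 0 < N j j := by
  have h1 := hN.dotProduct_mulVec_pos (x := (Pi.single j 1 : m → ℝ))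
    (fun hc => by have hcj := congrFun hc j; rw [Pi.single_eq_same] at hcj; exact one_ne_zero hcj)
  rw [star_real] at h1
  simpa [dotProduct, Matrix.mulVec_single, Pi.single_apply] using h1

lemma conj_entry (X P : Matrix m m ℝ) (j : m) :
    (Pᵀ * X * P) j j = (P *ᵥ Pi.single j 1) ⬝ᵥ (X *ᵥ (P *ᵥ Pi.single j 1)) := by
  have h1 : (Pᵀ * X * P) j j = Pi.single j 1 ⬝ᵥ ((Pᵀ * X * P) *ᵥ Pi.single j 1) := by
    simp [dotProduct, Matrix.mulVec_single, Pi.single_apply]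
  rw [h1, ← Matrix.mulVec_mulVec, ← Matrix.mulVec_mulVec, Matrix.dotProduct_mulVec,
    Matrix.vecMul_transpose]

end helpers

section keylemma
variable {m : Type*} [Fintype m] [DecidableEq m]
open scoped MatrixOrder


lemma det_holder {A B M : Matrix m m ℝ}
    (hA : A.PosDef) (hB : B.PosDef) (hM : M.PosDef) {θ : ℝ}
    (hq : ∀ v : m → ℝ, v ⬝ᵥ (M *ᵥ v) ≤ (v ⬝ᵥ (A *ᵥ v)) ^ θ * (v ⬝ᵥ (B *ᵥ v)) ^ (1 - θ)) :
    M.det ≤ A.det ^ θ * B.det ^ (1 - θ) := by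
  classical
  set S := CFC.sqrt A with hSdef
  have hS : S.PosSemidef := Matrix.nonneg_iff_posSemidef.mp (CFC.sqrt_nonneg A)
  have hSS : S * S = A := CFC.sqrt_mul_sqrt_self A hA.posSemidef.nonneg
  have hdetS : S.det * S.det = A.det := by rw [← hSS, Matrix.det_mul]
  have hdetSne : S.det ≠ 0 := by
    intro h; rw [h, mul_zero] at hdetS; exact hA.det_pos.ne' hdetS.symm
  set W := S⁻¹ with hWdef
  have hW : W.IsHermitian := hS.1.inv
  have hWT : Wᵀ = W := by
    rw [← conjTranspose_eq_transpose_of_trivial, hW.eq]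
  have hWS : W * S = 1 := Matrix.nonsing_inv_mul S hdetSne.isUnit
  have hSW : S * W = 1 := Matrix.mul_nonsing_inv S hdetSne.isUnit
  have hdetW : IsUnit W.det := by
    have : W.det * S.det = 1 := by rw [← Matrix.det_mul, hWS, Matrix.det_one]
    exact IsUnit.of_mul_eq_one _ this
  have hWAW : W * A * W = 1 := by
    rw [← hSS, show W * (S * S) * W = (W * S) * (S * W) by noncomm_ring, hWS, hSW, Matrix.one_mul]
  have hB' : (Wᵀ * B * W).PosDef := posdef_conj hB hdetW
  rw [hWT] at hB'
  set B' := W * B * W with hB'def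
  set hermB' := hB'.1 with hhermB'
  set μ := hermB'.eigenvalues with hμ
  set U : Matrix m m ℝ := (hermB'.eigenvectorUnitary : Matrix m m ℝ) with hU
  have hUstar : star U * B' * U = Matrix.diagonal μ := by
    have := hermB'.conjStarAlgAut_star_eigenvectorUnitary
    simpa [Unitary.conjStarAlgAut_star_apply] using this
  have hUU : star U * U = 1 := Unitary.coe_star_mul_self hermB'.eigenvectorUnitary
  have hdetU : IsUnit U.det := by
    have : (star U).det * U.det = 1 := by rw [← Matrix.det_mul, hUU, Matrix.det_one]
    exact IsUnit.of_mul_eq_one _ (by rw [mul_comm] at this; exact this)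
  have hUT : Uᵀ = star U := by
    rw [Matrix.star_eq_conjTranspose, conjTranspose_eq_transpose_of_trivial]
  set P := W * U with hP
  have hPT : Pᵀ = star U * W := by rw [hP, Matrix.transpose_mul, hWT, hUT]
  have hdetP : IsUnit P.det := by rw [hP, Matrix.det_mul]; exact hdetW.mul hdetU
  have hPAP : Pᵀ * A * P = 1 := by
    rw [hPT, hP, show star U * W * A * (W * U) = star U * (W * A * W) * U by noncomm_ring,
      hWAW, Matrix.mul_one, hUU]
  have hPBP : Pᵀ * B * P = Matrix.diagonal μ := by
    rw [hPT, hP, show star U * W * B * (W * U) = star U * (W * B * W) * U by noncomm_ring,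
      ← hB'def, hUstar]
  have hM'' : (Pᵀ * M * P).PosDef := posdef_conj hM hdetP
  set M'' := Pᵀ * M * P with hM''def
  have hμpos : ∀ j, 0 < μ j := hB'.eigenvalues_pos
  -- diagonal bound
  have hdiagbound : ∀ j, M'' j j ≤ (μ j) ^ (1 - θ) := by
    intro j
    have hcA : (Pᵀ * A * P) j j = (P *ᵥ Pi.single j 1) ⬝ᵥ (A *ᵥ (P *ᵥ Pi.single j 1)) :=
      conj_entry A P j
    have hcB : (Pᵀ * B * P) j j = (P *ᵥ Pi.single j 1) ⬝ᵥ (B *ᵥ (P *ᵥ Pi.single j 1)) :=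
      conj_entry B P j
    have hcM : M'' j j = (P *ᵥ Pi.single j 1) ⬝ᵥ (M *ᵥ (P *ᵥ Pi.single j 1)) :=
      conj_entry M P j
    have h1j : (1 : Matrix m m ℝ) j j = 1 := Matrix.one_apply_eq j
    have hDj : (Matrix.diagonal μ) j j = μ j := Matrix.diagonal_apply_eq μ j
    calc M'' j j = (P *ᵥ Pi.single j 1) ⬝ᵥ (M *ᵥ (P *ᵥ Pi.single j 1)) := hcM
      _ ≤ ((P *ᵥ Pi.single j 1) ⬝ᵥ (A *ᵥ (P *ᵥ Pi.single j 1))) ^ θ *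
          ((P *ᵥ Pi.single j 1) ⬝ᵥ (B *ᵥ (P *ᵥ Pi.single j 1))) ^ (1 - θ) := hq _
      _ = ((Pᵀ * A * P) j j) ^ θ * ((Pᵀ * B * P) j j) ^ (1 - θ) := by rw [hcA, hcB]
      _ = (μ j) ^ (1 - θ) := by
          rw [hPAP, hPBP, h1j, hDj, Real.one_rpow, one_mul]
  have hhad : M''.det ≤ ∏ j, M'' j j := det_le_prod_diag hM''
  have hprodle : ∏ j, M'' j j ≤ ∏ j, (μ j) ^ (1 - θ) :=
    Finset.prod_le_prod (fun j _ => (posdef_diag_pos hM'' j).le) (fun j _ => hdiagbound j)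
  have hprodrpow : ∏ j, (μ j) ^ (1 - θ) = (∏ j, μ j) ^ (1 - θ) :=
    Real.finset_prod_rpow Finset.univ μ (fun j _ => (hμpos j).le) (1 - θ)
  -- determinant bookkeeping
  have hdetM'' : M''.det = P.det ^ 2 * M.det := by
    rw [hM''def, Matrix.det_mul, Matrix.det_mul, Matrix.det_transpose, sq]; ring
  have hdetA1 : P.det ^ 2 * A.det = 1 := by
    have := congrArg Matrix.det hPAP
    rwa [Matrix.det_mul, Matrix.det_mul, Matrix.det_transpose, Matrix.det_one,
      show P.det * A.det * P.det = P.det ^ 2 * A.det by ring] at this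
  have hdetB1 : P.det ^ 2 * B.det = ∏ j, μ j := by
    have := congrArg Matrix.det hPBP
    rwa [Matrix.det_mul, Matrix.det_mul, Matrix.det_transpose, Matrix.det_diagonal,
      show P.det * B.det * P.det = P.det ^ 2 * B.det by ring] at this
  have hd2pos : 0 < P.det ^ 2 := by
    rcases hdetP with ⟨u, hu⟩
    have : P.det ≠ 0 := by rw [← hu]; exact u.ne_zero
    positivity
  have ha := hA.det_pos
  have hb := hB.det_pos
  have hd2 : P.det ^ 2 = A.det⁻¹ := by
    field_simp at hdetA1 ⊢
    linarith [hdetA1]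
  have hμprod : ∏ j, μ j = B.det / A.det := by
    rw [← hdetB1, hd2]; field_simp
  -- combine
  have hfin : P.det ^ 2 * M.det ≤ (B.det / A.det) ^ (1 - θ) := by
    calc P.det ^ 2 * M.det = M''.det := hdetM''.symm
      _ ≤ ∏ j, M'' j j := hhad
      _ ≤ ∏ j, (μ j) ^ (1 - θ) := hprodle
      _ = (∏ j, μ j) ^ (1 - θ) := hprodrpow
      _ = (B.det / A.det) ^ (1 - θ) := by rw [hμprod]
  have hMle : M.det ≤ A.det * (B.det / A.det) ^ (1 - θ) := by
    rw [hd2] at hfin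
    calc M.det = A.det * (A.det⁻¹ * M.det) := by field_simp
      _ ≤ A.det * (B.det / A.det) ^ (1 - θ) := by
          apply mul_le_mul_of_nonneg_left _ ha.le
          exact hfin
  calc M.det ≤ A.det * (B.det / A.det) ^ (1 - θ) := hMle
    _ = A.det ^ θ * B.det ^ (1 - θ) := by
        rw [Real.div_rpow hb.le ha.le]
        rw [show A.det * (B.det ^ (1 - θ) / A.det ^ (1 - θ)) =
          (A.det / A.det ^ (1 - θ)) * B.det ^ (1 - θ) by ring]
        congr 1
        rw [show A.det / A.det ^ (1 - θ) = A.det ^ (1:ℝ) / A.det ^ (1 - θ) by rw [Real.rpow_one]]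
        rw [← Real.rpow_sub ha]
        norm_num
end keylemma

lemma scalar_holder {n : ℕ} (q : Fin n → ℝ) (hq : ∀ i, 0 ≤ q i) (x y : Fin n → ℝ)
    {a b : ℝ} (ha : 0 < a) (hb : 0 < b) (hab : a + b = 1) :
    ∑ i, Real.exp (a * x i + b * y i) * q i ≤
      (∑ i, Real.exp (x i) * q i) ^ a * (∑ i, Real.exp (y i) * q i) ^ b := by
  have ha1 : a < 1 := by linarith
  have hpq : Real.HolderConjugate a⁻¹ b⁻¹ :=
    Real.holderConjugate_iff.mpr ⟨(one_lt_inv₀ ha).mpr ha1, by rw [inv_inv, inv_inv]; exact hab⟩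
  have key := Real.inner_le_Lp_mul_Lq_of_nonneg (s := Finset.univ)
    (f := fun i => (Real.exp (x i) * q i) ^ a) (g := fun i => (Real.exp (y i) * q i) ^ b)
    hpq (fun i _ => Real.rpow_nonneg (mul_nonneg (Real.exp_pos _).le (hq i)) _)
    (fun i _ => Real.rpow_nonneg (mul_nonneg (Real.exp_pos _).le (hq i)) _)
  have hfg : ∀ i : Fin n, (Real.exp (x i) * q i) ^ a * (Real.exp (y i) * q i) ^ b =
      Real.exp (a * x i + b * y i) * q i := by
    intro i
    rw [Real.mul_rpow (Real.exp_pos _).le (hq i), Real.mul_rpow (Real.exp_pos _).le (hq i)]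
    rw [show Real.exp (x i) ^ a * q i ^ a * (Real.exp (y i) ^ b * q i ^ b) =
      (Real.exp (x i) ^ a * Real.exp (y i) ^ b) * (q i ^ a * q i ^ b) by ring]
    rw [← Real.rpow_add' (hq i) (by rw [hab]; norm_num), hab, Real.rpow_one]
    rw [← Real.exp_mul, ← Real.exp_mul, ← Real.exp_add]
    ring_nf
  have hf2 : ∀ i : Fin n, ((Real.exp (x i) * q i) ^ a) ^ a⁻¹ = Real.exp (x i) * q i :=
    fun i => Real.rpow_rpow_inv (mul_nonneg (Real.exp_pos _).le (hq i)) ha.ne'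
  have hg2 : ∀ i : Fin n, ((Real.exp (y i) * q i) ^ b) ^ b⁻¹ = Real.exp (y i) * q i :=
    fun i => Real.rpow_rpow_inv (mul_nonneg (Real.exp_pos _).le (hq i)) hb.ne'
  calc ∑ i, Real.exp (a * x i + b * y i) * q i
      = ∑ i, (Real.exp (x i) * q i) ^ a * (Real.exp (y i) * q i) ^ b :=
        (Finset.sum_congr rfl fun i _ => (hfg i)).symm
    _ ≤ (∑ i, ((Real.exp (x i) * q i) ^ a) ^ a⁻¹) ^ (1 / a⁻¹) *
        (∑ i, ((Real.exp (y i) * q i) ^ b) ^ b⁻¹) ^ (1 / b⁻¹) := key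
    _ = (∑ i, Real.exp (x i) * q i) ^ a * (∑ i, Real.exp (y i) * q i) ^ b := by
        rw [Finset.sum_congr rfl fun i _ => hf2 i, Finset.sum_congr rfl fun i _ => hg2 i,
          one_div, inv_inv, one_div, inv_inv]

theorem logDet_posDef_and_convexOn {n : ℕ}
    (Q : Fin n → Matrix (Fin n) (Fin n) ℝ)
    (hQ : ∀ i, (Q i).PosDef) (hsymm : ∀ i, (Q i).IsSymm) :
    (∀ x ∈ {x : Fin n → ℝ | ∑ i, x i = 0},
      (∑ i, Real.exp (x i) • Q i).PosDef) ∧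
    ConvexOn ℝ {x : Fin n → ℝ | ∑ i, x i = 0}
      (fun x => Real.log (Matrix.det (∑ i, Real.exp (x i) • Q i))) := by
  have hpos : ∀ x : Fin n → ℝ, (∑ i, Real.exp (x i) • Q i).PosDef :=
    posdef_sum_exp_smul Q hQ
  refine ⟨fun x _ => hpos x, ?_, ?_⟩
  · exact convex_hyperplane
      ⟨fun u v => by simp [Finset.sum_add_distrib],
        fun c u => by simp [Finset.mul_sum, smul_eq_mul]⟩ 0
  · intro x hx y hy a b ha hb hab
    by_cases haz : a = 0
    · have hb1 : b = 1 := by linarith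
      subst haz
      subst hb1
      simp
    by_cases hbz : b = 0
    · have ha1 : a = 1 := by linarith
      subst hbz
      subst ha1
      simp
    have ha' : 0 < a := lt_of_le_of_ne ha (Ne.symm haz)
    have hb' : 0 < b := lt_of_le_of_ne hb (Ne.symm hbz)
    have hquad : ∀ v : Fin n → ℝ,
        v ⬝ᵥ ((∑ i, Real.exp ((a • x + b • y) i) • Q i) *ᵥ v) ≤
          (v ⬝ᵥ ((∑ i, Real.exp (x i) • Q i) *ᵥ v)) ^ a *
          (v ⬝ᵥ ((∑ i, Real.exp (y i) • Q i) *ᵥ v)) ^ (1 - a) := by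
      intro v
      have hqnn : ∀ i, 0 ≤ v ⬝ᵥ (Q i *ᵥ v) := by
        intro i
        have := (hQ i).posSemidef.dotProduct_mulVec_nonneg v
        rwa [star_real] at this
      have hzi : ∀ i : Fin n, (a • x + b • y) i = a * x i + b * y i := by
        intro i; simp [smul_eq_mul]
      have h1a : (1 : ℝ) - a = b := by linarith
      rw [h1a]
      calc v ⬝ᵥ ((∑ i, Real.exp ((a • x + b • y) i) • Q i) *ᵥ v)
          = ∑ i, Real.exp (a * x i + b * y i) * (v ⬝ᵥ (Q i *ᵥ v)) := by
            rw [quad_sum]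
            exact Finset.sum_congr rfl fun i _ => by rw [quad_smul, hzi i]
        _ ≤ (∑ i, Real.exp (x i) * (v ⬝ᵥ (Q i *ᵥ v))) ^ a *
            (∑ i, Real.exp (y i) * (v ⬝ᵥ (Q i *ᵥ v))) ^ b :=
            scalar_holder _ hqnn x y ha' hb' hab
        _ = (v ⬝ᵥ ((∑ i, Real.exp (x i) • Q i) *ᵥ v)) ^ a *
            (v ⬝ᵥ ((∑ i, Real.exp (y i) • Q i) *ᵥ v)) ^ b := by
            rw [quad_sum, quad_sum]
            congr 1
            · congr 1
              exact Finset.sum_congr rfl fun i _ => (quad_smul v _ (Q i)).symm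
            · congr 1
              exact Finset.sum_congr rfl fun i _ => (quad_smul v _ (Q i)).symm
    have hdet := det_holder (hpos x) (hpos y) (hpos (a • x + b • y)) hquad
    have hdx := (hpos x).det_pos
    have hdy := (hpos y).det_pos
    have hdz := (hpos (a • x + b • y)).det_pos
    have hlog := Real.log_le_log hdz hdet
    rw [Real.log_mul (Real.rpow_pos_of_pos hdx _).ne' (Real.rpow_pos_of_pos hdy _).ne',
      Real.log_rpow hdx, Real.log_rpow hdy] at hlog
    have h1a : (1 : ℝ) - a = b := by linarith
    rw [h1a] at hlog
    simpa [smul_eq_mul] using hlog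
end

section
/- Let q : ℝ^n → ℝ be a positive definite quadratic form with tr q = 1 whose maximum eigenvalue is at most α times its minimum eigenvalue (α ≥ 1). Let H ⊂ ℝ^n be a hyperplane and q̂ the restriction of q to H. Then 1 − α/n ≤ tr q̂ ≤ 1 − 1/(αn). -/
open Matrix

theorem trace_restriction_bounds {m : ℕ} (α : ℝ) (hα : 1 ≤ α)
    (Q : Matrix (Fin (m + 1)) (Fin (m + 1)) ℝ) (hQ : Q.PosDef)
    (htr : Q.trace = 1)
    (hcond : ∀ x y : EuclideanSpace ℝ (Fin (m + 1)), ‖x‖ = 1 → ‖y‖ = 1 →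
      x ⬝ᵥ Q *ᵥ x ≤ α * (y ⬝ᵥ Q *ᵥ y))
    (u : EuclideanSpace ℝ (Fin (m + 1))) (hu : ‖u‖ = 1)
    (b : Fin m → EuclideanSpace ℝ (Fin (m + 1)))
    (hb : Orthonormal ℝ b) (hbu : ∀ j, @inner ℝ _ _ u (b j) = 0) :
    1 - α / (m + 1) ≤ (∑ j, b j ⬝ᵥ Q *ᵥ b j) ∧
      (∑ j, b j ⬝ᵥ Q *ᵥ b j) ≤ 1 - 1 / (α * (m + 1)) := by
  have hα0 : (0:ℝ) < α := lt_of_lt_of_le one_pos hα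
  have hn0 : (0:ℝ) < (m:ℝ) + 1 := by positivity
  -- standard basis vectors
  have hnorm_e : ∀ i : Fin (m+1), ‖(EuclideanSpace.single i (1:ℝ))‖ = 1 := by
    intro i; simp
  have hefun : ∀ i : Fin (m+1),
      (EuclideanSpace.single i (1:ℝ) : Fin (m+1) → ℝ) = Pi.single i 1 := by
    intro i; funext j; simp [EuclideanSpace.single_apply, Pi.single_apply, eq_comm]
  have he : ∀ i : Fin (m+1),
      (EuclideanSpace.single i (1:ℝ)) ⬝ᵥ Q *ᵥ (EuclideanSpace.single i (1:ℝ)) = Q i i := by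
    intro i
    show (EuclideanSpace.single i (1:ℝ) : Fin (m+1) → ℝ) ⬝ᵥ
        Q *ᵥ (EuclideanSpace.single i (1:ℝ) : Fin (m+1) → ℝ) = Q i i
    rw [hefun]
    simp [mulVec_single, dotProduct, Pi.single_apply]
  -- the full orthonormal family
  set v : Fin (m+1) → EuclideanSpace ℝ (Fin (m+1)) := Fin.cons u b with hv
  have hvorth : ∀ k l : Fin (m+1), @inner ℝ _ _ (v k) (v l) = if k = l then (1:ℝ) else 0 := by
    intro k l
    refine Fin.cases ?_ ?_ k <;> [skip; intro k'] <;> refine Fin.cases ?_ ?_ l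
    · rw [if_pos rfl]
      have : v 0 = u := by simp [hv]
      rw [this, real_inner_self_eq_norm_sq, hu]; norm_num
    · intro l'; simpa [hv, (Fin.succ_ne_zero l').symm] using hbu l'
    · simp only [hv, Fin.cons_succ, Fin.cons_zero]
      rw [real_inner_comm]
      simpa using hbu k'
    · intro l'
      simp only [hv, Fin.cons_succ]
      rcases eq_or_ne k' l' with rfl | h
      · rw [if_pos rfl, real_inner_self_eq_norm_sq, hb.1 k']; norm_num
      · simp [hb.2 h, Fin.succ_inj, h]
  set P : Matrix (Fin (m+1)) (Fin (m+1)) ℝ := Matrix.of (fun i k => (v k : Fin (m+1) → ℝ) i) with hP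
  have hPtP : Pᵀ * P = 1 := by
    ext k l
    simp only [mul_apply, transpose_apply, hP, of_apply, one_apply]
    have := hvorth k l
    rw [PiLp.inner_apply] at this
    simpa [RCLike.inner_apply, mul_comm] using this
  have hPPt : P * Pᵀ = 1 := mul_eq_one_comm.mp hPtP
  have htrace_eq : Q.trace = ∑ k, (v k : Fin (m+1) → ℝ) ⬝ᵥ Q *ᵥ (v k : Fin (m+1) → ℝ) := by
    have h1 : Q.trace = (Pᵀ * (Q * P)).trace := by
      rw [trace_mul_comm, Matrix.mul_assoc, hPPt, Matrix.mul_one]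
    rw [h1]
    simp only [trace, diag_apply, mul_apply, transpose_apply, hP, of_apply]
    refine Finset.sum_congr rfl fun k _ => ?_
    rfl
  have hsplit : ∑ k, (v k : Fin (m+1) → ℝ) ⬝ᵥ Q *ᵥ (v k : Fin (m+1) → ℝ)
      = u ⬝ᵥ Q *ᵥ u + ∑ j, b j ⬝ᵥ Q *ᵥ b j := by
    rw [Fin.sum_univ_succ]
    simp [hv]
  have hkey : (∑ j, b j ⬝ᵥ Q *ᵥ b j) = 1 - u ⬝ᵥ Q *ᵥ u := by
    rw [← htr, htrace_eq, hsplit]; ring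
  -- bounds on uQu
  have htr_sum : ∑ i : Fin (m+1), Q i i = 1 := by rw [← htr]; rfl
  have hub : u ⬝ᵥ Q *ᵥ u ≤ α / ((m:ℝ)+1) := by
    have h : ∀ i : Fin (m+1), u ⬝ᵥ Q *ᵥ u ≤ α * Q i i := by
      intro i
      have := hcond u (EuclideanSpace.single i 1) hu (hnorm_e i)
      rwa [he i] at this
    have hsum : ((m:ℝ)+1) * (u ⬝ᵥ Q *ᵥ u) ≤ α := by
      calc ((m:ℝ)+1) * (u ⬝ᵥ Q *ᵥ u) = ∑ _i : Fin (m+1), u ⬝ᵥ Q *ᵥ u := by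
            simp [Finset.sum_const, mul_comm]
        _ ≤ ∑ i : Fin (m+1), α * Q i i := Finset.sum_le_sum (fun i _ => h i)
        _ = α := by rw [← Finset.mul_sum, htr_sum, mul_one]
    rw [le_div_iff₀ hn0]
    linarith
  have hlb : 1 / (α * ((m:ℝ)+1)) ≤ u ⬝ᵥ Q *ᵥ u := by
    have h : ∀ i : Fin (m+1), Q i i ≤ α * (u ⬝ᵥ Q *ᵥ u) := by
      intro i
      have := hcond (EuclideanSpace.single i 1) u (hnorm_e i) hu
      rwa [he i] at this
    have hsum : (1:ℝ) ≤ ((m:ℝ)+1) * (α * (u ⬝ᵥ Q *ᵥ u)) := by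
      calc (1:ℝ) = ∑ i : Fin (m+1), Q i i := htr_sum.symm
        _ ≤ ∑ _i : Fin (m+1), α * (u ⬝ᵥ Q *ᵥ u) := Finset.sum_le_sum (fun i _ => h i)
        _ = ((m:ℝ)+1) * (α * (u ⬝ᵥ Q *ᵥ u)) := by simp [Finset.sum_const, mul_comm]
    rw [div_le_iff₀ (by positivity)]
    nlinarith
  constructor
  · rw [hkey]; linarith
  · rw [hkey]; linarith
end

section
/- Let q_1, ..., q_n : ℝ^n → ℝ be an α-conditioned n-tuple of positive definite quadratic forms. Let L ⊂ ℝ^n be an m-dimensional subspace (1 ≤ m ≤ n), T : L → ℝ^n a linear map with trivial kernel, and τ_1, ..., τ_m > 0 reals. Define p_i(x) = τ_i q_i(Tx) for x ∈ L and i = 1, ..., m. Suppose Σ_{i=1}^m p_i(x) = ‖x‖^2 for all x ∈ L and tr p_i = 1 for all i. Then the m-tuple p_1, ..., p_m is α^4-conditioned, i.e., p_i(x) ≤ α^4 p_j(y) for all i, j and all unit vectors x, y ∈ L. -/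
/-!
Write `p_k = τ_k (q_k ∘ T)`. Since `q_j ≤ α q_i` pointwise, the normalisations
`τ_i tr(q_i ∘ T) = 1 = τ_j tr(q_j ∘ T)` give `τ_i ≤ α τ_j`. For unit `x, y`, comparing
`∑_k τ_k q_k(Tx) = 1 = ∑_k τ_k q_k(Ty)` term by term, each `q_k` being α-conditioned, gives
`‖Tx‖² ≤ α ‖Ty‖²`; together with `‖Ty‖² q_i(Tx) ≤ α ‖Tx‖² q_j(Ty)` this yields
`q_i(Tx) ≤ α² q_j(Ty)`. Hence `p_i(x) ≤ α³ p_j(y) ≤ α⁴ p_j(y)`.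
-/

open Matrix

noncomputable def Matrix.toEuclideanQuadraticForm {n : Type*} [Fintype n] [DecidableEq n]
    (A : Matrix n n ℝ) : QuadraticForm ℝ (EuclideanSpace ℝ n) :=
  A.toQuadraticForm'.comp (WithLp.linearEquiv 2 ℝ (n → ℝ)).toLinearMap

@[simp]
theorem Matrix.toEuclideanQuadraticForm_apply {n : Type*} [Fintype n] [DecidableEq n]
    (A : Matrix n n ℝ) (x : EuclideanSpace ℝ n) :
    A.toEuclideanQuadraticForm x = x ⬝ᵥ A *ᵥ x := by
  simp [Matrix.toEuclideanQuadraticForm, Matrix.toQuadraticForm', Matrix.toLinearMap₂'_apply']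

theorem le_mul_of_mul_sum_eq_one {ι : Type*} (s : Finset ι) {f g : ι → ℝ} {a b α : ℝ}
    (hgf : ∀ k, g k ≤ α * f k) (ha : 0 ≤ a) (hb : 0 < b)
    (hf : a * ∑ k ∈ s, f k = 1) (hg : b * ∑ k ∈ s, g k = 1) : a ≤ α * b := by
  have hsum_le : ∑ k ∈ s, g k ≤ α * ∑ k ∈ s, f k := by
    rw [Finset.mul_sum]
    exact Finset.sum_le_sum fun k _ => hgf k
  have hsum_pos : 0 < ∑ k ∈ s, g k := (mul_pos_iff_of_pos_left hb).mp (hg ▸ one_pos)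
  refine le_of_mul_le_mul_right ?_ hsum_pos
  calc a * ∑ k ∈ s, g k ≤ a * (α * ∑ k ∈ s, f k) := mul_le_mul_of_nonneg_left hsum_le ha
    _ = α * (a * ∑ k ∈ s, f k) := by ring
    _ = α * b * ∑ k ∈ s, g k := by rw [hf, mul_assoc, hg]

namespace QuadraticMap

variable {E : Type*} [NormedAddCommGroup E] [NormedSpace ℝ E] {α : ℝ}

theorem sq_norm_mul_le_of_unit_le {q r : QuadraticMap ℝ E ℝ}
    (h : ∀ u v : E, ‖u‖ = 1 → ‖v‖ = 1 → q u ≤ α * r v) (w w' : E) :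
    ‖w'‖ ^ 2 * q w ≤ α * ‖w‖ ^ 2 * r w' := by
  rcases eq_or_ne w 0 with rfl | hw
  · simp
  rcases eq_or_ne w' 0 with rfl | hw'
  · simp
  have hnormalized := h _ _ (norm_smul_inv_norm (𝕜 := ℝ) hw) (norm_smul_inv_norm (𝕜 := ℝ) hw')
  simp only [QuadraticMap.map_smul, smul_eq_mul, RCLike.ofReal_real_eq_id, id] at hnormalized
  have hw_pos : 0 < ‖w‖ := norm_pos_iff.mpr hw
  have hw'_pos : 0 < ‖w'‖ := norm_pos_iff.mpr hw'
  field_simp at hnormalized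
  linarith

theorem le_mul_of_unit_le {q r : QuadraticMap ℝ E ℝ}
    (h : ∀ u v : E, ‖u‖ = 1 → ‖v‖ = 1 → q u ≤ α * r v) (w : E) : q w ≤ α * r w := by
  rcases eq_or_ne w 0 with rfl | hw
  · simp
  have hw_pos : 0 < ‖w‖ ^ 2 := by positivity
  refine le_of_mul_le_mul_left ?_ hw_pos
  linarith [sq_norm_mul_le_of_unit_le h w w]

theorem le_sq_mul_of_sq_norm_le {q r : QuadraticMap ℝ E ℝ} (hα : 0 ≤ α)
    (h : ∀ u v : E, ‖u‖ = 1 → ‖v‖ = 1 → q u ≤ α * r v) (hr : ∀ v, 0 ≤ r v) {w w' : E}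
    (hw' : w' ≠ 0) (hnorm : ‖w‖ ^ 2 ≤ α * ‖w'‖ ^ 2) : q w ≤ α ^ 2 * r w' := by
  have hw'_pos : 0 < ‖w'‖ ^ 2 := by positivity
  refine le_of_mul_le_mul_left ?_ hw'_pos
  calc ‖w'‖ ^ 2 * q w ≤ α * ‖w‖ ^ 2 * r w' := sq_norm_mul_le_of_unit_le h w w'
    _ ≤ α * (α * ‖w'‖ ^ 2) * r w' := by gcongr; exact hr w'
    _ = ‖w'‖ ^ 2 * (α ^ 2 * r w') := by ring

theorem sq_norm_le_of_sum_eq_one {ι : Type*} [Fintype ι] {q : ι → QuadraticMap ℝ E ℝ}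
    {τ : ι → ℝ} (hτ : ∀ k, 0 ≤ τ k)
    (h : ∀ k, ∀ u v : E, ‖u‖ = 1 → ‖v‖ = 1 → q k u ≤ α * q k v) {w w' : E}
    (hw : ∑ k, τ k * q k w = 1) (hw' : ∑ k, τ k * q k w' = 1) :
    ‖w‖ ^ 2 ≤ α * ‖w'‖ ^ 2 :=
  calc ‖w‖ ^ 2 = ∑ k, τ k * (‖w‖ ^ 2 * q k w') := by
        simp only [mul_left_comm (τ _), ← Finset.mul_sum, hw', mul_one]
    _ ≤ ∑ k, τ k * (α * ‖w'‖ ^ 2 * q k w) :=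
        Finset.sum_le_sum fun k _ =>
          mul_le_mul_of_nonneg_left (sq_norm_mul_le_of_unit_le (h k) w' w) (hτ k)
    _ = α * ‖w'‖ ^ 2 := by
        simp only [mul_left_comm (τ _), ← Finset.mul_sum, hw, mul_one]

end QuadraticMap

theorem scaled_tuple_conditioned_general {n m : ℕ} (hmn : m ≤ n)
    (α : ℝ) (hα : 1 ≤ α)
    (Q : Fin n → Matrix (Fin n) (Fin n) ℝ) (hQ : ∀ i, (Q i).PosDef)
    (hcond : ∀ i j, ∀ x y : EuclideanSpace ℝ (Fin n), ‖x‖ = 1 → ‖y‖ = 1 →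
      x ⬝ᵥ Q i *ᵥ x ≤ α * (y ⬝ᵥ Q j *ᵥ y))
    (T : EuclideanSpace ℝ (Fin m) →ₗ[ℝ] EuclideanSpace ℝ (Fin n))
    (τ : Fin m → ℝ) (hτ : ∀ i, 0 < τ i)
    (p : Fin m → EuclideanSpace ℝ (Fin m) → ℝ)
    (hp : ∀ i x, p i x = τ i * (T x ⬝ᵥ Q (i.castLE hmn) *ᵥ T x))
    (hsum : ∀ x : EuclideanSpace ℝ (Fin m), ∑ i, p i x = ‖x‖ ^ 2)
    (htr : ∀ i, ∑ j, p i (EuclideanSpace.single j 1) = 1) :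
    ∀ i j, ∀ x y : EuclideanSpace ℝ (Fin m), ‖x‖ = 1 → ‖y‖ = 1 →
      p i x ≤ α ^ 4 * p j y := by
  intro i j x y hx hy
  set q : Fin m → QuadraticForm ℝ (EuclideanSpace ℝ (Fin n)) :=
    fun k => (Q (k.castLE hmn)).toEuclideanQuadraticForm
  have hpq : ∀ k z, p k z = τ k * q k (T z) := by simp [q, hp]
  have hq_cond : ∀ k l, ∀ u v, ‖u‖ = 1 → ‖v‖ = 1 → q k u ≤ α * q l v := by
    simpa [q] using fun k l : Fin m => hcond (k.castLE hmn) (l.castLE hmn)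
  have hq_nonneg : ∀ k v, 0 ≤ q k v := fun k v => by
    simpa [q] using (hQ (k.castLE hmn)).posSemidef.dotProduct_mulVec_nonneg v
  have hunit : ∀ z, ‖z‖ = 1 → ∑ k, τ k * q k (T z) = 1 := fun z hz => by
    simpa [hpq, hz] using hsum z
  have hτ_le : τ i ≤ α * τ j :=
    le_mul_of_mul_sum_eq_one Finset.univ (fun _ => QuadraticMap.le_mul_of_unit_le (hq_cond j i) _)
      (hτ i).le (hτ j) (by simpa [hpq, Finset.mul_sum] using htr i)
      (by simpa [hpq, Finset.mul_sum] using htr j)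
  have hTy : T y ≠ 0 := fun hTy => by simpa [hTy] using hunit y hy
  have hq_le : q i (T x) ≤ α ^ 2 * q j (T y) :=
    QuadraticMap.le_sq_mul_of_sq_norm_le (by linarith) (hq_cond i j) (hq_nonneg j) hTy
      (QuadraticMap.sq_norm_le_of_sum_eq_one (fun k => (hτ k).le) (fun k => hq_cond k k)
        (hunit x hx) (hunit y hy))
  rw [hpq, hpq]
  calc τ i * q i (T x) ≤ (α * τ j) * (α ^ 2 * q j (T y)) :=
        mul_le_mul hτ_le hq_le (hq_nonneg _ _) (mul_pos (by linarith) (hτ j)).le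
    _ = α ^ 3 * (τ j * q j (T y)) := by ring
    _ ≤ α ^ 4 * (τ j * q j (T y)) :=
        mul_le_mul_of_nonneg_right (pow_le_pow_right₀ hα (by norm_num))
          (mul_nonneg (hτ j).le (hq_nonneg _ _))

theorem scaled_tuple_conditioned {n m : ℕ} (hm : 1 ≤ m) (hmn : m ≤ n)
    (α : ℝ) (hα : 1 ≤ α)
    (Q : Fin n → Matrix (Fin n) (Fin n) ℝ) (hQ : ∀ i, (Q i).PosDef)
    (hcond : ∀ i j, ∀ x y : EuclideanSpace ℝ (Fin n), ‖x‖ = 1 → ‖y‖ = 1 →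
      x ⬝ᵥ Q i *ᵥ x ≤ α * (y ⬝ᵥ Q j *ᵥ y))
    (T : EuclideanSpace ℝ (Fin m) →ₗ[ℝ] EuclideanSpace ℝ (Fin n))
    (hT : Function.Injective T)
    (τ : Fin m → ℝ) (hτ : ∀ i, 0 < τ i)
    (p : Fin m → EuclideanSpace ℝ (Fin m) → ℝ)
    (hp : ∀ i x, p i x = τ i * (T x ⬝ᵥ Q (i.castLE hmn) *ᵥ T x))
    (hsum : ∀ x : EuclideanSpace ℝ (Fin m), ∑ i, p i x = ‖x‖ ^ 2)
    (htr : ∀ i, ∑ j, p i (EuclideanSpace.single j 1) = 1) :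
    ∀ i j, ∀ x y : EuclideanSpace ℝ (Fin m), ‖x‖ = 1 → ‖y‖ = 1 →
      p i x ≤ α ^ 4 * p j y :=
  scaled_tuple_conditioned_general hmn α hα Q hQ hcond T τ hτ p hp hsum htr
end
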